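/- arXiv:2509.16356 — 2 statements merged into one kernel-verified Lean document; each statement's English description precedes it below -/
import Mathlib

section
/- Let G be a group with commuting involutions θ₁, θ₂, and let γ ∈ G satisfy γ·θ₂(γ) = 1. If γ commutes with θ₁(γ)⁻¹ (i.e., γ is θ₁θ₂-normal), then any h in the θ₁-fixed subgroup H₁ satisfying h⁻¹·γ·θ₂(h) = γ must satisfy θ₂(h) = h, provided γ lies in the centralizer of δ := γ·θ₁(γ)⁻¹ and that h commutes with γ whenever h centralizes δ (e.g., the centralizer of δ is abelian and contains γ). -/
theorem stmt0 {G : Type*} [Group G] (θ₁ θ₂ : G ≃* G)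
    (hcomm : ∀ g, θ₁ (θ₂ g) = θ₂ (θ₁ g))
    (hθ₁ : ∀ g, θ₁ (θ₁ g) = g) (hθ₂ : ∀ g, θ₂ (θ₂ g) = g)
    (γ : G) (hγ : γ * θ₂ γ = 1)
    (hnormal : γ * (θ₁ γ)⁻¹ = (θ₁ γ)⁻¹ * γ)
    (hcent : ∀ h : G, h * (γ * (θ₁ γ)⁻¹) = (γ * (θ₁ γ)⁻¹) * h → h * γ = γ * h)
    (h : G) (hh : θ₁ h = h) (hstab : h⁻¹ * γ * θ₂ h = γ) :
    θ₂ h = h := by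
  have h2 : θ₂ h = γ⁻¹ * (h * γ) := by
    have e := congrArg (fun x => γ⁻¹ * (h * x)) hstab
    simpa [mul_assoc, mul_inv_cancel_left, inv_mul_cancel_left] using e
  have h1 : h⁻¹ * θ₁ γ * θ₂ h = θ₁ γ := by
    have := congrArg θ₁ hstab
    simpa [map_mul, hcomm h, hh] using this
  have h3 : θ₂ h = (θ₁ γ)⁻¹ * (h * θ₁ γ) := by
    have e := congrArg (fun x => (θ₁ γ)⁻¹ * (h * x)) h1
    simpa [mul_assoc, mul_inv_cancel_left, inv_mul_cancel_left] using e
  have key : γ⁻¹ * (h * γ) = (θ₁ γ)⁻¹ * (h * θ₁ γ) := h2.symm.trans h3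
  have h4 : h * (γ * (θ₁ γ)⁻¹) = (γ * (θ₁ γ)⁻¹) * h := by
    have e := congrArg (fun x => γ * x * (θ₁ γ)⁻¹) key
    simp only [mul_assoc, mul_inv_cancel_left, inv_mul_cancel_left, mul_inv_cancel, mul_one] at e ⊢
    exact e
  have h5 := hcent h h4
  rw [h2, h5, inv_mul_cancel_left]
end

section
/- Let G be a group acting on the right on a set X, and τ : G → G an involutive automorphism. Consider the twisted action of G on itself: γ·g = g⁻¹γτ(g). Suppose γ ∈ G is 'normal' in the sense that γ commutes with δ := γ·α(γ)⁻¹ for a second involutive automorphism α commuting with τ, and suppose every element of G commuting with δ also commutes with γ (e.g., the centralizer of δ is abelian and contains γ). Then the stabilizer of γ under the twisted action, T_γ = {g ∈ G : g⁻¹γτ(g) = γ}, is contained in the τ-fixed subgroup G^τ: indeed g ∈ T_γ implies g centralizes δ, hence commutes with γ, hence τ(g) = g. -/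
theorem stmt18 {G : Type*} [Group G] (τ α : G ≃* G)
    (hτ : ∀ g, τ (τ g) = g) (hα : ∀ g, α (α g) = g)
    (hcomm : ∀ g, τ (α g) = α (τ g))
    (γ : G) (hγτ : τ γ = γ⁻¹)
    (hδ : γ * (γ * (α γ)⁻¹) = (γ * (α γ)⁻¹) * γ)
    (hcent : ∀ g : G, g * (γ * (α γ)⁻¹) = (γ * (α γ)⁻¹) * g → g * γ = γ * g)
    (g : G) (hg : α g = g) (hstab : g⁻¹ * γ * τ g = γ) :
    τ g = g := by
  have h1 : τ g = γ⁻¹ * g * γ := by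
    have h := hstab
    calc τ g = γ⁻¹ * (g * (g⁻¹ * γ * τ g)) := by group
    _ = γ⁻¹ * (g * γ) := by rw [h]
    _ = γ⁻¹ * g * γ := by group
  have h2 : τ g = (α γ)⁻¹ * g * (α γ) := by
    have h := congrArg α hstab
    simp only [map_mul, map_inv, hg] at h
    rw [← hcomm, hg] at h
    calc τ g = (α γ)⁻¹ * (g * (g⁻¹ * α γ * τ g)) := by group
    _ = (α γ)⁻¹ * (g * α γ) := by rw [h]
    _ = (α γ)⁻¹ * g * (α γ) := by group
  have h3 : γ⁻¹ * g * γ = (α γ)⁻¹ * g * (α γ) := h1 ▸ h2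
  have hcd : g * (γ * (α γ)⁻¹) = (γ * (α γ)⁻¹) * g := by
    calc g * (γ * (α γ)⁻¹) = γ * (γ⁻¹ * g * γ) * (α γ)⁻¹ := by group
    _ = γ * ((α γ)⁻¹ * g * (α γ)) * (α γ)⁻¹ := by rw [h3]
    _ = (γ * (α γ)⁻¹) * g := by group
  have hcg := hcent g hcd
  calc τ g = γ⁻¹ * (g * γ) := by rw [h1]; group
  _ = γ⁻¹ * (γ * g) := by rw [hcg]
  _ = g := by group
end
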